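/- Let T be a connected ℤ^d-tile T(A,D), let n₀ ≥ 1 and K ∈ ℕ, and suppose that for each n ≥ n₀ a nonempty set W₂^(n) ⊆ V_n is given such that the subgraph of the Hata graph G_n induced on W₂^(n) is connected, W₂^(n+1) ⊆ C(W₂^(n)), and #W₂^(n) ≤ K. Then the sets X_n(W₂^(n)) are nonempty compact connected sets satisfying X_{n+1}(W₂^(n+1)) ⊆ X_n(W₂^(n)) for all n ≥ n₀, their diameters tend to 0 as n → ∞, and ⋂_{n≥n₀} X_n(W₂^(n)) consists of a single point. -/

import Mathlib

open Set Filter Topology Matrix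

noncomputable section

/-- A set is the union of two nonempty separated sets. -/
def SepUnion {α : Type*} [TopologicalSpace α] (S : Set α) : Prop :=
  ∃ U V : Set α, S = U ∪ V ∧ U.Nonempty ∧ V.Nonempty ∧
    closure U ∩ V = ∅ ∧ U ∩ closure V = ∅

/-- `X` is a cut set of `T`: `X ⊆ T` and `T \ X` is disconnected. -/
def IsCutSet {α : Type*} [TopologicalSpace α] (T X : Set α) : Prop :=
  X ⊆ T ∧ SepUnion (T \ X)

/-- `X` is an irreducible cut set of `T`. -/
def IsIrredCutSet {α : Type*} [TopologicalSpace α] (T X : Set α) : Prop :=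
  IsCutSet T X ∧ ∀ X₀ : Set α, X₀ ⊂ X → closure X₀ ∩ T ⊆ X₀ → ¬ SepUnion (T \ X₀)

/-- The real matrix obtained from an integer matrix. -/
def rmat {d : ℕ} (A : Matrix (Fin d) (Fin d) ℤ) : Matrix (Fin d) (Fin d) ℝ :=
  A.map Int.cast

/-- The real vector obtained from an integer vector. -/
def rvec {d : ℕ} (v : Fin d → ℤ) : Fin d → ℝ := fun i => (v i : ℝ)

/-- The translate `T + v` of `T` by a lattice vector `v`. -/
def trT {d : ℕ} (T : Set (Fin d → ℝ)) (v : Fin d → ℤ) : Set (Fin d → ℝ) :=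
  (fun x => x + rvec v) '' T

/-- Every complex eigenvalue of `A` has modulus `> 1`. -/
def Expanding {d : ℕ} (A : Matrix (Fin d) (Fin d) ℤ) : Prop :=
  ∀ μ : ℂ, Module.End.HasEigenvalue (Matrix.toLin' (A.map (Int.cast : ℤ → ℂ))) μ →
    1 < ‖μ‖

/-- `D` is a complete set of coset representatives of `ℤ^d / A ℤ^d`. -/
def ResidueSystem {d : ℕ} (A : Matrix (Fin d) (Fin d) ℤ) (D : Set (Fin d → ℤ)) : Prop :=
  ∀ x : Fin d → ℤ, ∃! e, e ∈ D ∧ ∃ y : Fin d → ℤ, x = A.mulVec y + e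

/-- `T` is the attractor `T(A,D)`: nonempty, compact, with `A·T = T + D`. -/
def SelfAffine {d : ℕ} (A : Matrix (Fin d) (Fin d) ℤ) (D : Set (Fin d → ℤ))
    (T : Set (Fin d → ℝ)) : Prop :=
  T.Nonempty ∧ IsCompact T ∧
    (rmat A).mulVec '' T = ⋃ e ∈ D, (fun x => x + rvec e) '' T

/-- `T = T(A,D)` is a `ℤ^d`-tile: a self-affine attractor for an expanding integer
matrix and a standard digit set, with nonempty interior, tiling `ℝ^d` by `ℤ^d`. -/
def IsZdTile {d : ℕ} (A : Matrix (Fin d) (Fin d) ℤ) (D : Set (Fin d → ℤ))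
    (T : Set (Fin d → ℝ)) : Prop :=
  Expanding A ∧ ResidueSystem A D ∧ SelfAffine A D T ∧ (interior T).Nonempty ∧
    (⋃ v : Fin d → ℤ, trT T v) = univ ∧
    Pairwise fun v₁ v₂ : Fin d → ℤ => interior (trT T v₁) ∩ trT T v₂ = ∅

/-- `V_n = D + A·D + ⋯ + A^{n-1}·D`, the vertex set of the `n`-th Hata graph. -/
def Vset {d : ℕ} (A : Matrix (Fin d) (Fin d) ℤ) (D : Set (Fin d → ℤ)) (n : ℕ) :
    Set (Fin d → ℤ) :=
  {v | ∃ dig : Fin n → (Fin d → ℤ), (∀ k, dig k ∈ D) ∧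
    v = ∑ k : Fin n, (A ^ (k : ℕ)).mulVec (dig k)}

/-- The set of children `C(U) = A·U + D`. -/
def childSet {d : ℕ} (A : Matrix (Fin d) (Fin d) ℤ) (D : Set (Fin d → ℤ))
    (U : Set (Fin d → ℤ)) : Set (Fin d → ℤ) :=
  {w | ∃ u ∈ U, ∃ e ∈ D, w = A.mulVec u + e}

/-- `X_n(W) = ⋃_{v ∈ W} A^{-n}(T + v)`. -/
def XnSet {d : ℕ} (A : Matrix (Fin d) (Fin d) ℤ) (T : Set (Fin d → ℝ)) (n : ℕ)
    (W : Set (Fin d → ℤ)) : Set (Fin d → ℝ) :=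
  ⋃ v ∈ W, ((rmat A)⁻¹ ^ n).mulVec '' trT T v

/-- The subgraph of the `n`-th Hata graph induced on `W` is connected:
any two vertices of `W` are joined by a path inside `W`, consecutive tiles meeting. -/
def HataConn {d : ℕ} (T : Set (Fin d → ℝ)) (W : Set (Fin d → ℤ)) : Prop :=
  ∀ v ∈ W, ∀ w ∈ W,
    Relation.ReflTransGen (fun a b => a ∈ W ∧ b ∈ W ∧ (trT T a ∩ trT T b).Nonempty) v w


/-!
Each `X_n(W)` is the image under `A⁻ⁿ` of a union of translates `T + v`, `v ∈ W`, chained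
together by intersections. Such a union is connected and compact, and since a shortest chain
visits at most `#W ≤ K` tiles, its diameter is at most `K · diam T`. As `A` is expanding, the
spectral radius of `A⁻¹` is `< 1`, so `‖A⁻ⁿ‖ → 0` by Gelfand's formula and the diameters of the
`X_n(W₂⁽ⁿ⁾)` tend to `0`. Nestedness comes from `T + D ⊆ A T`, and Cantor's intersection theorem
then yields a single point.
-/

section IntersectionGraph

variable {ι α : Type*}

def intersectionGraph (S : ι → Set α) : SimpleGraph ι where
  Adj i j := i ≠ j ∧ (S i ∩ S j).Nonempty
  symm := ⟨fun _ _ h => ⟨h.1.symm, Set.inter_comm (S _) (S _) ▸ h.2⟩⟩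
  loopless := ⟨fun _ h => h.1 rfl⟩

variable [PseudoMetricSpace α] {S : ι → Set α} {δ : ℝ}

theorem dist_le_of_walk_intersectionGraph (hδ : ∀ i, ∀ x ∈ S i, ∀ y ∈ S i, dist x y ≤ δ)
    {i j : ι} (p : (intersectionGraph S).Walk i j) {x y : α} (hx : x ∈ S i) (hy : y ∈ S j) :
    dist x y ≤ (p.length + 1) * δ := by
  induction p generalizing x with
  | nil => simpa using hδ _ x hx y hy
  | cons hadj q ih =>
    obtain ⟨z, hz, hz'⟩ := hadj.2
    calc dist x y ≤ dist x z + dist z y := dist_triangle _ _ _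
      _ ≤ δ + (q.length + 1) * δ := add_le_add (hδ _ x hx z hz) (ih hz' hy)
      _ = ((q.cons hadj).length + 1) * δ := by
        rw [SimpleGraph.Walk.length_cons]; push_cast; ring

theorem dist_le_card_mul_of_preconnected [Fintype ι]
    (hconn : (intersectionGraph S).Preconnected)
    (hδ : ∀ i, ∀ x ∈ S i, ∀ y ∈ S i, dist x y ≤ δ) :
    ∀ x ∈ ⋃ i, S i, ∀ y ∈ ⋃ i, S i, dist x y ≤ Fintype.card ι * δ := by
  classical
  intro x hx y hy
  obtain ⟨i, hxi⟩ := Set.mem_iUnion.mp hx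
  obtain ⟨j, hyj⟩ := Set.mem_iUnion.mp hy
  let p := (hconn i j).some.toPath
  have hlen : (p.1.length + 1 : ℝ) ≤ Fintype.card ι := mod_cast p.2.length_lt
  calc dist x y ≤ (p.1.length + 1) * δ := dist_le_of_walk_intersectionGraph hδ p.1 hxi hyj
    _ ≤ Fintype.card ι * δ :=
      mul_le_mul_of_nonneg_right hlen (dist_self x ▸ hδ i x hxi x hxi)

end IntersectionGraph

theorem exists_biInter_ge_eq_singleton {α : Type*} [MetricSpace α] {s : ℕ → Set α} {n₀ : ℕ}
    (hne : ∀ n, n₀ ≤ n → (s n).Nonempty) (hc : ∀ n, n₀ ≤ n → IsCompact (s n))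
    (hsub : ∀ n, n₀ ≤ n → s (n + 1) ⊆ s n)
    (hdiam : Tendsto (fun n => Metric.diam (s n)) atTop (𝓝 0)) :
    ∃ z, ⋂ n ≥ n₀, s n = {z} := by
  have hge (k : ℕ) : n₀ ≤ k + n₀ := Nat.le_add_left _ _
  rw [Set.iInter_ge_eq_iInter_nat_add]
  refine Set.exists_eq_singleton_iff_nonempty_subsingleton.mpr ⟨?_, fun x hx y hy => ?_⟩
  · refine IsCompact.nonempty_iInter_of_sequence_nonempty_isCompact_isClosed _
      (fun k => ?_) (fun k => hne _ (hge k)) (hc _ (hge 0)) fun k => (hc _ (hge k)).isClosed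
    rw [add_right_comm]
    exact hsub _ (hge k)
  rw [Set.mem_iInter] at hx hy
  refine dist_le_zero.mp (ge_of_tendsto (hdiam.comp (tendsto_add_atTop_nat n₀))
    (Eventually.of_forall fun k => ?_))
  exact Metric.dist_le_diam_of_mem (hc _ (hge k)).isBounded (hx k) (hy k)

section HataSets

variable {d : ℕ} {A : Matrix (Fin d) (Fin d) ℤ} {D : Set (Fin d → ℤ)} {T : Set (Fin d → ℝ)}
  {W : Set (Fin d → ℤ)}

theorem rvec_mulVec_add (A : Matrix (Fin d) (Fin d) ℤ) (u e : Fin d → ℤ) :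
    rvec (A.mulVec u + e) = (rmat A).mulVec (rvec u) + rvec e := by
  funext i
  simp only [rvec, Pi.add_apply, Matrix.mulVec, dotProduct, rmat, Matrix.map_apply]
  push_cast
  ring

theorem dist_le_diam_of_mem_trT (hT : IsCompact T) {v : Fin d → ℤ} {x y : Fin d → ℝ}
    (hx : x ∈ trT T v) (hy : y ∈ trT T v) : dist x y ≤ Metric.diam T := by
  obtain ⟨a, ha, rfl⟩ := hx
  obtain ⟨b, hb, rfl⟩ := hy
  rw [dist_add_right]
  exact Metric.dist_le_diam_of_mem hT.isBounded ha hb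

theorem HataConn.preconnected (hW : HataConn T W) :
    (intersectionGraph fun v : W => trT T v).Preconnected := by
  rintro ⟨v, hv⟩ ⟨w, hw⟩
  suffices ∀ b, Relation.ReflTransGen
      (fun a b => a ∈ W ∧ b ∈ W ∧ (trT T a ∩ trT T b).Nonempty) v b →
      ∀ hb : b ∈ W, (intersectionGraph fun v : W => trT T v).Reachable ⟨v, hv⟩ ⟨b, hb⟩ from
    this w (hW v hv w hw) hw
  intro b hvb
  induction hvb with
  | refl => exact fun _ => .rfl
  | @tail b c _ hbc ih =>
    intro hc
    by_cases hbc' : b = c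
    · subst hbc'
      exact ih hc
    · exact (ih hbc.1).trans
        (SimpleGraph.Adj.reachable ⟨fun h => hbc' (congrArg Subtype.val h), hbc.2.2⟩)

theorem HataConn.dist_le_mul_diam (hT : IsCompact T) (hW : HataConn T W) {K : ℕ}
    (hK : W.encard ≤ K) :
    ∀ x ∈ ⋃ v ∈ W, trT T v, ∀ y ∈ ⋃ v ∈ W, trT T v, dist x y ≤ K * Metric.diam T := by
  have := (Set.finite_of_encard_le_coe hK).fintype
  have hcard : (Fintype.card W : ℝ) ≤ K := by
    rw [Set.encard_eq_coe_toFinset_card, Set.toFinset_card] at hK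
    exact_mod_cast hK
  rw [Set.biUnion_eq_iUnion]
  intro x hx y hy
  exact (dist_le_card_mul_of_preconnected hW.preconnected
    (fun _ _ hx _ hy => dist_le_diam_of_mem_trT hT hx hy) x hx y hy).trans
    (mul_le_mul_of_nonneg_right hcard Metric.diam_nonneg)

theorem XnSet_eq_image (A : Matrix (Fin d) (Fin d) ℤ) (T : Set (Fin d → ℝ)) (n : ℕ)
    (W : Set (Fin d → ℤ)) :
    XnSet A T n W = ((rmat A)⁻¹ ^ n).mulVec '' ⋃ v ∈ W, trT T v := by
  rw [Set.image_iUnion₂]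
  rfl

theorem XnSet_mono {n : ℕ} {W' : Set (Fin d → ℤ)} (h : W ⊆ W') :
    XnSet A T n W ⊆ XnSet A T n W' :=
  Set.biUnion_subset_biUnion_left h

theorem SelfAffine.trT_mulVec_add_subset (hT : SelfAffine A D T) {e : Fin d → ℤ} (he : e ∈ D)
    (u : Fin d → ℤ) : trT T (A.mulVec u + e) ⊆ (rmat A).mulVec '' trT T u := by
  rintro _ ⟨t, ht, rfl⟩
  have hte : t + rvec e ∈ (rmat A).mulVec '' T := hT.2.2 ▸ Set.mem_biUnion he ⟨t, ht, rfl⟩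
  obtain ⟨s, hs, hse⟩ := hte
  refine ⟨s + rvec u, ⟨s, hs, rfl⟩, ?_⟩
  rw [Matrix.mulVec_add, hse, rvec_mulVec_add]
  exact (add_right_comm _ _ _).trans (add_assoc _ _ _)

theorem XnSet_succ_childSet_subset (hT : SelfAffine A D T) (hA : IsUnit (rmat A).det) (n : ℕ)
    (U : Set (Fin d → ℤ)) : XnSet A T (n + 1) (childSet A D U) ⊆ XnSet A T n U := by
  intro x hx
  obtain ⟨_, ⟨u, hu, e, he, rfl⟩, y, hy, rfl⟩ := Set.mem_iUnion₂.mp hx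
  obtain ⟨z, hz, rfl⟩ := hT.trT_mulVec_add_subset he u hy
  refine Set.mem_biUnion hu ⟨z, hz, ?_⟩
  rw [Matrix.mulVec_mulVec, pow_succ, Matrix.mul_assoc, Matrix.nonsing_inv_mul _ hA,
    Matrix.mul_one]

theorem isCompact_XnSet (hT : IsCompact T) (hW : W.Finite) (n : ℕ) :
    IsCompact (XnSet A T n W) := by
  rw [XnSet_eq_image]
  exact (hW.isCompact_biUnion fun v _ => hT.image (continuous_add_const _)).image
    (continuous_const.matrix_mulVec continuous_id)

theorem isConnected_XnSet (hT : IsConnected T) (hW : HataConn T W) (hne : W.Nonempty)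
    (n : ℕ) : IsConnected (XnSet A T n W) := by
  rw [XnSet_eq_image]
  refine (IsConnected.biUnion_of_reflTransGen hne
    (fun v _ => hT.image _ (continuous_add_const _).continuousOn) fun v hv w hw => ?_).image _
    (continuous_const.matrix_mulVec continuous_id).continuousOn
  exact Relation.ReflTransGen.mono (fun _ _ hab => ⟨hab.2.2, hab.1⟩) _ _ (hW v hv w hw)

end HataSets

section Contraction

-- Matrices carry no global norm; the `ℓ∞` operator norm is the one compatible with the sup norm
-- on `Fin d → ℝ` used by `Metric.diam`.
attribute [local instance] Matrix.linftyOpSeminormedAddCommGroup Matrix.linftyOpNormedRing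
  Matrix.linftyOpNormedAlgebra

theorem Matrix.linfty_opNNNorm_map_eq {m n α β : Type*} [Fintype m] [Fintype n]
    [SeminormedAddCommGroup α] [SeminormedAddCommGroup β] (M : Matrix m n α) (f : α → β)
    (hf : ∀ a, ‖f a‖₊ = ‖a‖₊) : ‖M.map f‖₊ = ‖M‖₊ := by
  simp only [Matrix.linfty_opNNNorm_def, Matrix.map_apply, hf]

theorem Matrix.lipschitzWith_mulVec {m n α : Type*} [Fintype m] [Fintype n]
    [NonUnitalSeminormedRing α] (M : Matrix m n α) : LipschitzWith ‖M‖₊ M.mulVec :=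
  LipschitzWith.of_dist_le_mul fun x y => by
    simpa only [dist_eq_norm, ← Matrix.mulVec_sub, coe_nnnorm] using
      Matrix.linfty_opNorm_mulVec M (x - y)

theorem tendsto_norm_pow_of_spectralRadius_lt_one {𝔸 : Type*} [NormedRing 𝔸]
    [NormedAlgebra ℂ 𝔸] [CompleteSpace 𝔸] {a : 𝔸} (h : spectralRadius ℂ a < 1) :
    Tendsto (fun n => ‖a ^ n‖) atTop (𝓝 0) := by
  obtain ⟨r, hρr, hr1⟩ := ENNReal.lt_iff_exists_nnreal_btwn.mp h
  have hev : ∀ᶠ n : ℕ in atTop, ‖a ^ n‖ ≤ (r : ℝ) ^ n := by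
    filter_upwards [(spectrum.gelfand_formula a).eventually_lt_const hρr,
      eventually_gt_atTop 0] with n hn hn0
    rw [one_div, ENNReal.rpow_inv_lt_iff (by positivity), ENNReal.rpow_natCast] at hn
    exact_mod_cast hn.le
  exact squeeze_zero' (Eventually.of_forall fun n => norm_nonneg _) hev
    (tendsto_pow_atTop_nhds_zero_of_lt_one r.2 (mod_cast hr1))

theorem spectralRadius_inv_lt_one {𝔸 : Type*} [NormedRing 𝔸] [NormedAlgebra ℂ 𝔸]
    [CompleteSpace 𝔸] (u : 𝔸ˣ) (h : ∀ μ ∈ spectrum ℂ (u : 𝔸), 1 < ‖μ‖) :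
    spectralRadius ℂ (↑u⁻¹ : 𝔸) < 1 := by
  have hlt : ∀ μ ∈ spectrum ℂ (↑u⁻¹ : 𝔸), ‖μ‖₊ < 1 := by
    intro μ hμ
    have hμ0 : μ ≠ 0 := by
      rintro rfl
      exact u⁻¹.zero_notMem_spectrum ℂ hμ
    have h1 := h μ⁻¹ (spectrum.inv₀_mem_iff.mpr hμ)
    rw [norm_inv, one_lt_inv₀ (norm_pos_iff.mpr hμ0)] at h1
    exact_mod_cast h1
  rcases (spectrum ℂ (↑u⁻¹ : 𝔸)).eq_empty_or_nonempty with hempty | hne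
  · simp [spectralRadius, hempty]
  · exact_mod_cast spectrum.spectralRadius_lt_of_forall_lt_of_nonempty hne hlt

variable {d : ℕ} {A : Matrix (Fin d) (Fin d) ℤ}

theorem Expanding.det_ne_zero (h : Expanding A) : A.det ≠ 0 := by
  intro h0
  have hdet : LinearMap.det (Matrix.toLin' (A.map (Int.cast : ℤ → ℂ))) = 0 := by
    rw [LinearMap.det_toLin', ← Int.cast_det, h0, Int.cast_zero]
  have := h 0 (((LinearMap.hasEigenvalue_zero_tfae _).out 0 3).mpr hdet)
  norm_num at this

theorem Expanding.isUnit_det_rmat (h : Expanding A) : IsUnit (rmat A).det := by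
  rw [rmat, ← Int.cast_det]
  exact isUnit_iff_ne_zero.mpr (Int.cast_ne_zero.mpr h.det_ne_zero)

theorem Expanding.tendsto_norm_rmat_inv_pow (h : Expanding A) :
    Tendsto (fun n => ‖(rmat A)⁻¹ ^ n‖) atTop (𝓝 0) := by
  set Ac := A.map (Int.cast : ℤ → ℂ)
  have hu : IsUnit Ac := by
    rw [Matrix.isUnit_iff_isUnit_det, ← Int.cast_det]
    exact isUnit_iff_ne_zero.mpr (Int.cast_ne_zero.mpr h.det_ne_zero)
  -- Gelfand's formula needs a complex Banach algebra, so pass to the complexification.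
  have hinv : Complex.ofRealHom.mapMatrix (rmat A)⁻¹ = ↑hu.unit⁻¹ := by
    rw [Matrix.coe_units_inv, IsUnit.unit_spec, eq_comm]
    refine Matrix.inv_eq_left_inv ?_
    have hAc : Ac = Complex.ofRealHom.mapMatrix (rmat A) := by ext; simp [Ac, rmat]
    rw [hAc, ← map_mul, Matrix.nonsing_inv_mul _ h.isUnit_det_rmat, map_one]
  have hnorm (n : ℕ) : ‖(rmat A)⁻¹ ^ n‖ = ‖(↑hu.unit⁻¹ : Matrix (Fin d) (Fin d) ℂ) ^ n‖ := by
    rw [← hinv, ← map_pow, RingHom.mapMatrix_apply, ← coe_nnnorm, ← coe_nnnorm,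
      Matrix.linfty_opNNNorm_map_eq _ _ fun a => by simp]
  simp_rw [hnorm]
  refine tendsto_norm_pow_of_spectralRadius_lt_one (spectralRadius_inv_lt_one _ fun μ hμ => ?_)
  refine h μ (Module.End.hasEigenvalue_iff_mem_spectrum.mpr ?_)
  rwa [Matrix.spectrum_toLin']

theorem Expanding.tendsto_diam_XnSet (hA : Expanding A) {T : Set (Fin d → ℝ)}
    (hT : IsCompact T) {W : ℕ → Set (Fin d → ℤ)} {n₀ K : ℕ}
    (hW : ∀ n, n₀ ≤ n → HataConn T (W n)) (hK : ∀ n, n₀ ≤ n → (W n).encard ≤ K) :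
    Tendsto (fun n => Metric.diam (XnSet A T n (W n))) atTop (𝓝 0) := by
  have hle (n : ℕ) (hn : n₀ ≤ n) :
      Metric.diam (XnSet A T n (W n)) ≤ ‖(rmat A)⁻¹ ^ n‖ * (K * Metric.diam T) := by
    have hdist := (hW n hn).dist_le_mul_diam hT (hK n hn)
    rw [XnSet_eq_image]
    refine ((Matrix.lipschitzWith_mulVec _).diam_image_le _
      (Metric.isBounded_iff.mpr ⟨_, hdist⟩)).trans ?_
    rw [coe_nnnorm]
    exact mul_le_mul_of_nonneg_left
      (Metric.diam_le_of_forall_dist_le (by positivity) hdist) (norm_nonneg _)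
  refine squeeze_zero' (Eventually.of_forall fun n => Metric.diam_nonneg)
    (eventually_atTop.mpr ⟨n₀, hle⟩) ?_
  simpa using hA.tendsto_norm_rmat_inv_pow.mul_const ((K : ℝ) * Metric.diam T)

end Contraction

theorem statement5_general {d : ℕ} (A : Matrix (Fin d) (Fin d) ℤ) (D : Set (Fin d → ℤ))
    (T : Set (Fin d → ℝ)) (htile : IsZdTile A D T) (hconn : IsConnected T)
    (n₀ : ℕ) (K : ℕ) (W₂ : ℕ → Set (Fin d → ℤ))
    (hne : ∀ n, n₀ ≤ n → (W₂ n).Nonempty)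
    (hW2conn : ∀ n, n₀ ≤ n → HataConn T (W₂ n))
    (hc2 : ∀ n, n₀ ≤ n → W₂ (n + 1) ⊆ childSet A D (W₂ n))
    (hK : ∀ n, n₀ ≤ n → (W₂ n).encard ≤ K) :
    (∀ n, n₀ ≤ n → (XnSet A T n (W₂ n)).Nonempty ∧ IsCompact (XnSet A T n (W₂ n)) ∧
        IsConnected (XnSet A T n (W₂ n)) ∧
        XnSet A T (n + 1) (W₂ (n + 1)) ⊆ XnSet A T n (W₂ n)) ∧
      Tendsto (fun n => Metric.diam (XnSet A T n (W₂ n))) atTop (𝓝 0) ∧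
      ∃ z : Fin d → ℝ, (⋂ n ≥ n₀, XnSet A T n (W₂ n)) = {z} := by
  obtain ⟨hexp, -, hsa, -⟩ := htile
  have hXconn (n : ℕ) (hn : n₀ ≤ n) : IsConnected (XnSet A T n (W₂ n)) :=
    isConnected_XnSet hconn (hW2conn n hn) (hne n hn) n
  have hXcpt (n : ℕ) (hn : n₀ ≤ n) : IsCompact (XnSet A T n (W₂ n)) :=
    isCompact_XnSet hsa.2.1 (Set.finite_of_encard_le_coe (hK n hn)) n
  have hXsub (n : ℕ) (hn : n₀ ≤ n) : XnSet A T (n + 1) (W₂ (n + 1)) ⊆ XnSet A T n (W₂ n) :=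
    (XnSet_mono (hc2 n hn)).trans (XnSet_succ_childSet_subset hsa hexp.isUnit_det_rmat n _)
  have hdiam := hexp.tendsto_diam_XnSet hsa.2.1 hW2conn hK
  exact ⟨fun n hn => ⟨(hXconn n hn).nonempty, hXcpt n hn, hXconn n hn, hXsub n hn⟩, hdiam,
    exists_biInter_ge_eq_singleton (fun n hn => (hXconn n hn).nonempty) hXcpt hXsub hdiam⟩

theorem statement5 {d : ℕ} (A : Matrix (Fin d) (Fin d) ℤ) (D : Set (Fin d → ℤ))
    (T : Set (Fin d → ℝ)) (htile : IsZdTile A D T) (hconn : IsConnected T)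
    (n₀ : ℕ) (hn₀ : 1 ≤ n₀) (K : ℕ) (W₂ : ℕ → Set (Fin d → ℤ))
    (hW2V : ∀ n, n₀ ≤ n → W₂ n ⊆ Vset A D n)
    (hne : ∀ n, n₀ ≤ n → (W₂ n).Nonempty)
    (hW2conn : ∀ n, n₀ ≤ n → HataConn T (W₂ n))
    (hc2 : ∀ n, n₀ ≤ n → W₂ (n + 1) ⊆ childSet A D (W₂ n))
    (hK : ∀ n, n₀ ≤ n → (W₂ n).encard ≤ K) :
    (∀ n, n₀ ≤ n → (XnSet A T n (W₂ n)).Nonempty ∧ IsCompact (XnSet A T n (W₂ n)) ∧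
        IsConnected (XnSet A T n (W₂ n)) ∧
        XnSet A T (n + 1) (W₂ (n + 1)) ⊆ XnSet A T n (W₂ n)) ∧
      Tendsto (fun n => Metric.diam (XnSet A T n (W₂ n))) atTop (𝓝 0) ∧
      ∃ z : Fin d → ℝ, (⋂ n ≥ n₀, XnSet A T n (W₂ n)) = {z} :=
  statement5_general A D T htile hconn n₀ K W₂ hne hW2conn hc2 hK
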